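/- Let α ∈ (0,1], t_f > 0, q ∈ ℕ, and μ₁, μ₂ > 0. Let A : ℝ → (q×q real matrices) be continuous with operator norm ‖A(t)‖ ≤ μ₁ for all t ∈ [0, t_f], let G : ℝ^q × ℝ → ℝ^q be continuous and satisfy ‖G(x,t) − G(y,t)‖ ≤ μ₂·‖x − y‖ for all x, y ∈ ℝ^q and t ∈ [0, t_f], and let v : ℝ → ℝ^q be continuous. Then for every x₀ ∈ ℝ^q there exists a continuous function x̄ : [0, t_f] → ℝ^q satisfying the Volterra integral equation x̄(t) = x₀ + (1/Γ(α)) ∫₀^t (t−s)^{α−1} ( A(s)·x̄(s) + G(x̄(s), s) + v(s) ) ds for all t ∈ [0, t_f]. -/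

import Mathlib

/-!
The solution is the fixed point of the Picard operator `x ↦ x₀ + fracIntegral α (f · x)` on
`C([0, T], E)`. For the Bielecki norm `sup_t exp (-l t) ‖x t‖` this operator is
`K / l ^ α`-Lipschitz, since `∫₀ᵗ (t - s)^(α-1) exp (l s) ds ≤ exp (l t) Γ(α) / l ^ α`
(after `s ↦ t - s` this is bounded by the Gamma integral); so it is a contraction once
`l ^ α > K`, and Banach's theorem applies. The operator preserves continuity because the
substitution `s = t v` turns `fracIntegral α g t` into `t ^ α` times an integral over the fixed
interval `[0, 1]`, continuous in `t` by dominated convergence.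
-/

open MeasureTheory Set Matrix Real intervalIntegral
open scoped Interval NNReal

variable {E : Type*} [NormedAddCommGroup E] [NormedSpace ℝ E]

noncomputable def fracIntegral (α : ℝ) (g : ℝ → E) (t : ℝ) : E :=
  (1 / Gamma α) • ∫ s in (0 : ℝ)..t, (t - s) ^ (α - 1) • g s

lemma intervalIntegrable_sub_rpow {α : ℝ} (hα : 0 < α) (t a b : ℝ) :
    IntervalIntegrable (fun s => (t - s) ^ (α - 1)) volume a b := by
  simpa using (intervalIntegrable_rpow' (a := t - a) (b := t - b) (r := α - 1)
    (by linarith)).comp_sub_left t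

lemma intervalIntegrable_sub_rpow_smul {α : ℝ} (hα : 0 < α) (t : ℝ) {g : ℝ → E} {a b : ℝ}
    (hg : ContinuousOn g [[a, b]]) :
    IntervalIntegrable (fun s => (t - s) ^ (α - 1) • g s) volume a b :=
  (intervalIntegrable_sub_rpow hα t a b).smul_continuousOn hg

lemma integral_sub_rpow_smul_eq_rpow_smul {α t : ℝ} (ht : 0 ≤ t) (hα : 0 < α) (g : ℝ → E) :
    ∫ s in (0 : ℝ)..t, (t - s) ^ (α - 1) • g s =
      t ^ α • ∫ v in (0 : ℝ)..1, (1 - v) ^ (α - 1) • g (t * v) := by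
  rcases ht.eq_or_lt with rfl | ht
  · simp [zero_rpow hα.ne']
  have hsub := integral_comp_mul_left (fun s => (t - s) ^ (α - 1) • g s) ht.ne'
    (a := 0) (b := 1)
  simp only [mul_zero, mul_one] at hsub
  rw [eq_inv_smul_iff₀ ht.ne'] at hsub
  rw [← hsub, ← intervalIntegral.integral_smul, ← intervalIntegral.integral_smul]
  refine integral_congr fun v hv => ?_
  rw [uIcc_of_le zero_le_one] at hv
  simp only [smul_smul]
  rw [show t - t * v = t * (1 - v) by ring, mul_rpow ht.le (by linarith [hv.2]), ← mul_assoc,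
    ← rpow_one_add' ht.le (by linarith), add_sub_cancel]

lemma continuous_integral_one_sub_rpow_smul {α : ℝ} (hα : 0 < α) {g : ℝ → E}
    (hg : Continuous g) :
    Continuous fun t => ∫ v in (0 : ℝ)..1, (1 - v) ^ (α - 1) • g (t * v) := by
  refine continuous_iff_continuousAt.2 fun t₀ => ?_
  obtain ⟨K, hK⟩ := (isCompact_closedBall (0 : ℝ) (|t₀| + 1)).exists_bound_of_continuousOn
    hg.continuousOn
  refine continuousAt_of_dominated_interval (bound := fun v => K * (1 - v) ^ (α - 1))
    (Filter.Eventually.of_forall fun t => ?_) ?_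
    ((intervalIntegrable_sub_rpow hα 1 0 1).const_mul K) ?_
  · exact (intervalIntegrable_sub_rpow_smul hα 1
      (hg.comp (continuous_const_mul t)).continuousOn).def'.aestronglyMeasurable
  · filter_upwards [Metric.closedBall_mem_nhds t₀ one_pos] with t ht
    refine Filter.Eventually.of_forall fun v hv => ?_
    rw [uIoc_of_le zero_le_one] at hv
    have hv1 : 0 ≤ 1 - v := by linarith [hv.2]
    have htv : t * v ∈ Metric.closedBall (0 : ℝ) (|t₀| + 1) := by
      rw [Metric.mem_closedBall, Real.dist_eq] at ht
      rw [mem_closedBall_zero_iff, norm_mul, norm_of_nonneg hv.1.le, Real.norm_eq_abs]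
      exact (mul_le_of_le_one_right (abs_nonneg t) hv.2).trans
        (by linarith [abs_sub_abs_le_abs_sub t t₀])
    rw [norm_smul, norm_of_nonneg (rpow_nonneg hv1 _), mul_comm]
    exact mul_le_mul_of_nonneg_right (hK _ htv) (rpow_nonneg hv1 _)
  · exact Filter.Eventually.of_forall fun v _ =>
      ((hg.comp (continuous_id.mul continuous_const)).const_smul _).continuousAt

lemma continuousOn_fracIntegral {α : ℝ} (hα : 0 < α) {g : ℝ → E} (hg : Continuous g) :
    ContinuousOn (fracIntegral α g) (Ici 0) := by
  refine (((continuous_rpow_const hα.le).smul (continuous_integral_one_sub_rpow_smul hα hg)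
    ).const_smul (1 / Gamma α)).continuousOn.congr fun t ht => ?_
  rw [fracIntegral, integral_sub_rpow_smul_eq_rpow_smul ht hα]
  rfl

lemma integral_rpow_mul_exp_neg_mul_le {α l t : ℝ} (hα : 0 < α) (hl : 0 < l) (ht : 0 ≤ t) :
    ∫ r in (0 : ℝ)..t, r ^ (α - 1) * exp (-(l * r)) ≤ (1 / l) ^ α * Gamma α := by
  have hint : IntegrableOn (fun r => r ^ (α - 1) * exp (-(l * r))) (Ioi 0) := by
    simpa using integrableOn_rpow_mul_exp_neg_mul_rpow (p := 1) (by linarith) one_pos hl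
  rw [integral_of_le ht, ← integral_rpow_mul_exp_neg_mul_Ioi hα hl]
  refine setIntegral_mono_set hint ?_ (Ioc_subset_Ioi_self.eventuallyLE)
  filter_upwards [self_mem_ae_restrict measurableSet_Ioi] with r hr
  exact mul_nonneg (rpow_nonneg (le_of_lt hr) _) (exp_pos _).le

lemma integral_sub_rpow_mul_exp_le {α l t : ℝ} (hα : 0 < α) (hl : 0 < l) (ht : 0 ≤ t) :
    ∫ s in (0 : ℝ)..t, (t - s) ^ (α - 1) * exp (l * s) ≤ exp (l * t) * ((1 / l) ^ α * Gamma α) := by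
  have hsplit : ∀ s, (t - s) ^ (α - 1) * exp (l * s) =
      exp (l * t) * ((t - s) ^ (α - 1) * exp (-(l * (t - s)))) := fun s => by
    rw [mul_left_comm, ← exp_add]; ring_nf
  simp_rw [hsplit]
  rw [intervalIntegral.integral_const_mul,
    integral_comp_sub_left (fun r => r ^ (α - 1) * exp (-(l * r))), sub_self, sub_zero]
  exact mul_le_mul_of_nonneg_left (integral_rpow_mul_exp_neg_mul_le hα hl ht) (exp_pos _).le

lemma norm_fracIntegral_le_of_norm_le_exp {α l t M : ℝ} (hα : 0 < α) (hl : 0 < l) (ht : 0 ≤ t)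
    {g : ℝ → E} (hg : ∀ s ∈ Icc 0 t, ‖g s‖ ≤ M * exp (l * s)) :
    ‖fracIntegral α g t‖ ≤ M * exp (l * t) / l ^ α := by
  have hM : 0 ≤ M := nonneg_of_mul_nonneg_left ((norm_nonneg _).trans (hg 0 ⟨le_rfl, ht⟩))
    (exp_pos _)
  have hbound : ‖∫ s in (0 : ℝ)..t, (t - s) ^ (α - 1) • g s‖ ≤
      M * ∫ s in (0 : ℝ)..t, (t - s) ^ (α - 1) * exp (l * s) := by
    rw [← intervalIntegral.integral_const_mul]
    refine norm_integral_le_of_norm_le ht (Filter.Eventually.of_forall fun s hs => ?_)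
      (((intervalIntegrable_sub_rpow hα t 0 t).mul_continuousOn
        (continuous_const.mul continuous_id).rexp.continuousOn).const_mul M)
    have hk : 0 ≤ (t - s) ^ (α - 1) := rpow_nonneg (by linarith [hs.2]) _
    rw [norm_smul, norm_of_nonneg hk, mul_left_comm]
    exact mul_le_mul_of_nonneg_left (hg s (Ioc_subset_Icc_self hs)) hk
  calc ‖fracIntegral α g t‖
      ≤ 1 / Gamma α * (M * (exp (l * t) * ((1 / l) ^ α * Gamma α))) := by
        rw [fracIntegral, norm_smul, norm_of_nonneg (by positivity)]
        gcongr
        exact hbound.trans (mul_le_mul_of_nonneg_left (integral_sub_rpow_mul_exp_le hα hl ht) hM)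
    _ = M * exp (l * t) / l ^ α := by
        rw [div_rpow zero_le_one hl.le, one_rpow]
        field_simp

lemma fracIntegral_sub {α t : ℝ} (hα : 0 < α) {g g' : ℝ → E} (hg : ContinuousOn g [[0, t]])
    (hg' : ContinuousOn g' [[0, t]]) :
    fracIntegral α g t - fracIntegral α g' t = fracIntegral α (fun s => g s - g' s) t := by
  simp only [fracIntegral, ← smul_sub]
  rw [← integral_sub (intervalIntegrable_sub_rpow_smul hα t hg)
    (intervalIntegrable_sub_rpow_smul hα t hg')]
  simp only [smul_sub]

section WeightedPicard

variable {T : ℝ} (hT : 0 ≤ T)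

noncomputable def expWeight (l : ℝ) (u : C(Icc 0 T, E)) (s : ℝ) : E :=
  exp (l * s) • IccExtend hT u s

/-- The Picard operator of `x = x₀ + fracIntegral α (f · x)` conjugated by the weight
`exp (l * t)`: the sup norm on `C(Icc 0 T, E)` then plays the role of the Bielecki norm. -/
noncomputable def weightedPicard (α l : ℝ) (f : ℝ → E → E) (x₀ : E) (u : C(Icc 0 T, E))
    (t : Icc 0 T) : E :=
  exp (-(l * t)) • (x₀ + fracIntegral α (fun s => f s (expWeight hT l u s)) t)

variable {hT}

lemma continuous_expWeight (l : ℝ) (u : C(Icc 0 T, E)) : Continuous (expWeight hT l u) :=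
  (continuous_const.mul continuous_id).rexp.smul (continuous_IccExtend_iff.2 u.continuous)

lemma norm_expWeight_sub_le (l : ℝ) (u u' : C(Icc 0 T, E)) {s : ℝ} (hs : s ∈ Icc 0 T) :
    ‖expWeight hT l u s - expWeight hT l u' s‖ ≤ dist u u' * exp (l * s) := by
  rw [expWeight, expWeight, ← smul_sub, norm_smul, norm_of_nonneg (exp_pos _).le, mul_comm,
    IccExtend_of_mem hT _ hs, IccExtend_of_mem hT _ hs, ← dist_eq_norm]
  exact mul_le_mul_of_nonneg_right (ContinuousMap.dist_apply_le_dist _) (exp_pos _).le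

variable {α l : ℝ} {f : ℝ → E → E}

lemma continuous_weightedPicard (hα : 0 < α) (hfc : Continuous (Function.uncurry f)) (x₀ : E)
    (u : C(Icc 0 T, E)) : Continuous (weightedPicard hT α l f x₀ u) := by
  have hF : Continuous fun s => f s (expWeight hT l u s) :=
    hfc.comp (continuous_id.prodMk (continuous_expWeight l u))
  refine (continuous_const.mul continuous_subtype_val).neg.rexp.smul
    (continuous_const.add ?_)
  exact (continuousOn_fracIntegral hα hF).comp_continuous continuous_subtype_val
    fun t => t.2.1

lemma dist_weightedPicard_le (hα : 0 < α) (hl : 0 < l) {K : ℝ≥0}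
    (hfc : Continuous (Function.uncurry f)) (hf : ∀ s ∈ Icc 0 T, LipschitzWith K (f s)) (x₀ : E)
    (u u' : C(Icc 0 T, E)) (t : Icc 0 T) :
    dist (weightedPicard hT α l f x₀ u t) (weightedPicard hT α l f x₀ u' t) ≤
      K / l ^ α * dist u u' := by
  obtain ⟨t, ht0, htT⟩ := t
  have hF : ∀ u : C(Icc 0 T, E), Continuous fun s => f s (expWeight hT l u s) := fun u =>
    hfc.comp (continuous_id.prodMk (continuous_expWeight l u))
  have hdiff : ∀ s ∈ Icc 0 t, ‖f s (expWeight hT l u s) - f s (expWeight hT l u' s)‖ ≤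
      (K * dist u u') * exp (l * s) := fun s hs => by
    have hsT : s ∈ Icc 0 T := ⟨hs.1, hs.2.trans htT⟩
    rw [← dist_eq_norm, mul_assoc]
    refine ((hf s hsT).dist_le_mul _ _).trans (mul_le_mul_of_nonneg_left ?_ K.2)
    rw [dist_eq_norm]
    exact norm_expWeight_sub_le l u u' hsT
  rw [dist_eq_norm, weightedPicard, weightedPicard, ← smul_sub, add_sub_add_left_eq_sub,
    fracIntegral_sub hα (hF u).continuousOn (hF u').continuousOn, norm_smul,
    norm_of_nonneg (exp_pos _).le]
  calc exp (-(l * t)) * ‖fracIntegral α _ t‖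
      ≤ exp (-(l * t)) * (K * dist u u' * exp (l * t) / l ^ α) :=
        mul_le_mul_of_nonneg_left (norm_fracIntegral_le_of_norm_le_exp hα hl ht0 hdiff)
          (exp_pos _).le
    _ = K / l ^ α * dist u u' * (exp (-(l * t)) * exp (l * t)) := by ring
    _ = K / l ^ α * dist u u' := by rw [← exp_add, neg_add_cancel, exp_zero, mul_one]

end WeightedPicard

theorem exists_continuous_eq_add_fracIntegral [CompleteSpace E] {α T : ℝ} {K : ℝ≥0}
    (hα : 0 < α) (hT : 0 ≤ T) {f : ℝ → E → E} (hfc : Continuous (Function.uncurry f))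
    (hf : ∀ s ∈ Icc 0 T, LipschitzWith K (f s)) (x₀ : E) :
    ∃ x : ℝ → E, Continuous x ∧
      ∀ t ∈ Icc 0 T, x t = x₀ + fracIntegral α (fun s => f s (x s)) t := by
  set l : ℝ := (2 * K + 1) ^ α⁻¹
  have hl : 0 < l := by positivity
  have hlα : l ^ α = 2 * K + 1 := by
    rw [← rpow_mul (by positivity), inv_mul_cancel₀ hα.ne', rpow_one]
  let S : C(Icc 0 T, E) → C(Icc 0 T, E) := fun u =>
    ⟨weightedPicard hT α l f x₀ u, continuous_weightedPicard hα hfc x₀ u⟩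
  have hS : ContractingWith (K / (2 * K + 1)) S := by
    refine ⟨(div_lt_one (by positivity)).2 (by linarith [K.2]), LipschitzWith.of_dist_le_mul
      fun u u' => (ContinuousMap.dist_le (by positivity)).2 fun t => ?_⟩
    push_cast
    rw [← hlα]
    exact dist_weightedPicard_le hα hl hfc hf x₀ u u' t
  let u := ContractingWith.fixedPoint S hS
  refine ⟨expWeight hT l u, continuous_expWeight l u, fun t ht => ?_⟩
  have hfix : u ⟨t, ht⟩ = weightedPicard hT α l f x₀ u ⟨t, ht⟩ :=
    (DFunLike.congr_fun hS.fixedPoint_isFixedPt _).symm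
  rw [expWeight, IccExtend_of_mem hT _ ht, hfix, weightedPicard, smul_smul, ← exp_add,
    add_neg_cancel, exp_zero, one_smul]

theorem volterra_existence_general
    (α : ℝ) (hα : α ∈ Set.Ioc (0 : ℝ) 1) (t_f : ℝ) (ht_f : 0 < t_f) (q : ℕ)
    (μ₁ μ₂ : ℝ)
    (A : ℝ → Matrix (Fin q) (Fin q) ℝ) (hAc : Continuous A)
    (hA : ∀ t ∈ Set.Icc (0 : ℝ) t_f, ∀ x : Fin q → ℝ, ‖A t *ᵥ x‖ ≤ μ₁ * ‖x‖)
    (G : (Fin q → ℝ) → ℝ → Fin q → ℝ)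
    (hGc : Continuous fun p : (Fin q → ℝ) × ℝ => G p.1 p.2)
    (hG : ∀ t ∈ Set.Icc (0 : ℝ) t_f, ∀ x y : Fin q → ℝ,
      ‖G x t - G y t‖ ≤ μ₂ * ‖x - y‖)
    (v : ℝ → Fin q → ℝ) (hv : Continuous v) (x₀ : Fin q → ℝ) :
    ∃ xbar : ℝ → Fin q → ℝ, ContinuousOn xbar (Set.Icc (0 : ℝ) t_f) ∧
      ∀ t ∈ Set.Icc (0 : ℝ) t_f,
        xbar t = x₀ + (1 / Real.Gamma α) •
          ∫ s in (0 : ℝ)..t,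
            ((t - s) ^ (α - 1)) • (A s *ᵥ xbar s + G (xbar s) s + v s) := by
  have hfc : Continuous fun p : ℝ × (Fin q → ℝ) => A p.1 *ᵥ p.2 + G p.2 p.1 + v p.1 :=
    (((hAc.comp continuous_fst).matrix_mulVec continuous_snd).add
      (hGc.comp continuous_swap)).add (hv.comp continuous_fst)
  have hf : ∀ s ∈ Icc 0 t_f, LipschitzWith (μ₁ + μ₂).toNNReal fun x => A s *ᵥ x + G x s + v s :=
    fun s hs => LipschitzWith.of_dist_le' fun x y => by
      rw [dist_eq_norm, dist_eq_norm, add_sub_add_right_eq_sub, add_sub_add_comm, ← mulVec_sub,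
        add_mul]
      exact (norm_add_le _ _).trans (add_le_add (hA s hs _) (hG s hs x y))
  obtain ⟨x, hx, hxeq⟩ := exists_continuous_eq_add_fracIntegral hα.1 ht_f.le hfc hf x₀
  exact ⟨x, hx.continuousOn, hxeq⟩

/-- Existence part of Lemma 2: under the bound `‖A(t)x‖ ≤ μ₁‖x‖`, a Lipschitz and
continuous `G` and a continuous `v`, for every initial value `x₀` there is a continuous
solution on `[0, t_f]` of the Volterra integral equation
`x̄(t) = x₀ + (1/Γ(α)) ∫₀ᵗ (t-s)^(α-1) (A(s) x̄(s) + G(x̄(s), s) + v(s)) ds`,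
equivalent to the fractional IVP `ᶜDᵅ x̄ = A x̄ + G(x̄,·) + v`, `x̄(0) = x₀`. -/
theorem volterra_existence
    (α : ℝ) (hα : α ∈ Set.Ioc (0 : ℝ) 1) (t_f : ℝ) (ht_f : 0 < t_f) (q : ℕ)
    (μ₁ μ₂ : ℝ) (hμ₁ : 0 < μ₁) (hμ₂ : 0 < μ₂)
    (A : ℝ → Matrix (Fin q) (Fin q) ℝ) (hAc : Continuous A)
    (hA : ∀ t ∈ Set.Icc (0 : ℝ) t_f, ∀ x : Fin q → ℝ, ‖A t *ᵥ x‖ ≤ μ₁ * ‖x‖)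
    (G : (Fin q → ℝ) → ℝ → Fin q → ℝ)
    (hGc : Continuous fun p : (Fin q → ℝ) × ℝ => G p.1 p.2)
    (hG : ∀ t ∈ Set.Icc (0 : ℝ) t_f, ∀ x y : Fin q → ℝ,
      ‖G x t - G y t‖ ≤ μ₂ * ‖x - y‖)
    (v : ℝ → Fin q → ℝ) (hv : Continuous v) (x₀ : Fin q → ℝ) :
    ∃ xbar : ℝ → Fin q → ℝ, ContinuousOn xbar (Set.Icc (0 : ℝ) t_f) ∧
      ∀ t ∈ Set.Icc (0 : ℝ) t_f,
        xbar t = x₀ + (1 / Real.Gamma α) •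
          ∫ s in (0 : ℝ)..t,
            ((t - s) ^ (α - 1)) • (A s *ᵥ xbar s + G (xbar s) s + v s) :=
  volterra_existence_general α hα t_f ht_f q μ₁ μ₂ A hAc hA G hGc hG v hv x₀
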